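/- arXiv:1507.01085 — 3 statements merged into one kernel-verified Lean document; each statement's English description precedes it below -/
import Mathlib

section
/- Let $m$ be a probability measure on $\mathbb{R}$ with CDF $F$, and for $n \geq 1$ let $\mu^n = \frac{1}{n}\sum_{k=1}^n \delta_{x_k}$ with $x_k = F^{-1}((2k-1)/(2n))$. If there exist $-\infty < a < b < +\infty$ with $m([a,b]) = 1$, then $W_1(m,\mu^n) \leq (b-a)/(2n)$. -/
open MeasureTheory Set
open scoped ENNReal

/-- The cumulative distribution function of a measure on `ℝ`. -/
noncomputable def cdfOf (m : Measure ℝ) (x : ℝ) : ℝ := (m (Iic x)).toReal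

/-- Pseudo-inverse of a CDF: `F⁻¹(v) = inf {x | F x ≥ v}`. -/
noncomputable def pinv (F : ℝ → ℝ) (v : ℝ) : ℝ := sInf {x | v ≤ F x}

/-- Optimal `n`-point quantization `μⁿ = (1/n) ∑ₖ δ_{F⁻¹((2k-1)/(2n))}`. -/
noncomputable def quant (m : Measure ℝ) (n : ℕ) : Measure ℝ :=
  ((n : ℝ≥0∞)⁻¹) • ∑ k ∈ Finset.Icc 1 n,
    Measure.dirac (pinv (cdfOf m) ((2 * (k : ℝ) - 1) / (2 * n)))

/-- Wasserstein-1 distance via pseudo-inverses of the CDFs. -/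
noncomputable def W1 (m m' : Measure ℝ) : ℝ :=
  ∫ v in Ioo (0 : ℝ) 1, |pinv (cdfOf m) v - pinv (cdfOf m') v|

/-!
`F⁻¹` is nondecreasing on `(0, 1]` with values in `[a, b]`, and the pseudo-inverse of `μⁿ` is the
step function equal on `(i/n, (i+1)/n]` to `F⁻¹` at the midpoint of that interval. On such a
block, monotonicity turns `∫ |F⁻¹ - F⁻¹(midpoint)|` into (integral over the right half) −
(integral over the left half). The half-block integrals of `F⁻¹` increase, so the sum over the
blocks is at most the last half-block integral minus the first one, hence at most
`(b - a) / (2n)`.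
-/

open Finset in
lemma sum_range_sub_le_of_le_succ {J : ℕ → ℝ} {n : ℕ}
    (hJ : ∀ k, k + 1 < 2 * n → J k ≤ J (k + 1)) :
    ∑ i ∈ range n, (J (2 * i + 1) - J (2 * i)) ≤ J (2 * n - 1) - J 0 := by
  induction n with
  | zero => simp
  | succ n ih =>
    have hsum := ih fun k hk => hJ k (by omega)
    have hstep : J (2 * n - 1) ≤ J (2 * n) := by
      rcases n with _ | n
      · rfl
      · exact hJ (2 * (n + 1) - 1) (by omega)
    rw [sum_range_succ, show 2 * (n + 1) - 1 = 2 * n + 1 by omega]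
    linarith

open Finset in
lemma setIntegral_Ioo_eq_sum_intervalIntegral {f : ℝ → ℝ} {n : ℕ} (hn : 0 < n)
    (hf : ∀ i < n, IntervalIntegrable f volume (i / n) ((i + 1) / n)) :
    ∫ v in Set.Ioo 0 1, f v = ∑ i ∈ range n, ∫ v in (i / n : ℝ)..(i + 1) / n, f v := by
  have hsplit := intervalIntegral.sum_integral_adjacent_intervals (μ := volume) (f := f)
    (a := fun i : ℕ => (i / n : ℝ)) (n := n) fun i hi => by simpa using hf i hi
  rw [setIntegral_congr_set Ioo_ae_eq_Ioc, ← intervalIntegral.integral_of_le zero_le_one]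
  simp only [Nat.cast_zero, zero_div, div_self (Nat.cast_ne_zero.2 hn.ne' : (n : ℝ) ≠ 0),
    Nat.cast_succ] at hsplit
  exact hsplit.symm

section Monotone

variable {G : ℝ → ℝ}

lemma intervalIntegrable_of_monotoneOn_Ioc {x y c : ℝ} (hxy : x ≤ y)
    (hG : MonotoneOn G (Ioc x y)) (hc : ∀ v ∈ Ioc x y, c ≤ G v) :
    IntervalIntegrable G volume x y := by
  rw [intervalIntegrable_iff_integrableOn_Ioc_of_le hxy]
  have : IsFiniteMeasure (volume.restrict (Ioc x y)) :=
    isFiniteMeasure_restrict.2 measure_Ioc_lt_top.ne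
  refine Integrable.of_bound
    (aemeasurable_restrict_of_monotoneOn measurableSet_Ioc hG).aestronglyMeasurable (max |c| |G y|)
    ((ae_restrict_iff' measurableSet_Ioc).2 (ae_of_all _ fun v hv => ?_))
  exact abs_le_max_abs_abs (hc v hv) (hG hv ⟨hv.1.trans_le hv.2, le_rfl⟩ hv.2)

lemma integral_abs_sub_midpoint_eq {x h : ℝ} (hh : 0 ≤ h)
    (hG : MonotoneOn G (Ioc x (x + 2 * h))) (hGi : IntervalIntegrable G volume x (x + 2 * h)) :
    ∫ v in x..x + 2 * h, |G v - G (x + h)| =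
      (∫ v in x + h..x + 2 * h, G v) - ∫ v in x..x + h, G v := by
  have hl : IntervalIntegrable G volume x (x + h) :=
    hGi.mono_set (uIcc_subset_uIcc left_mem_uIcc (mem_uIcc_of_le (by linarith) (by linarith)))
  have hr : IntervalIntegrable G volume (x + h) (x + 2 * h) :=
    hGi.mono_set (uIcc_subset_uIcc (mem_uIcc_of_le (by linarith) (by linarith)) right_mem_uIcc)
  have hleft : ∫ v in x..x + h, |G v - G (x + h)| = ∫ v in x..x + h, (G (x + h) - G v) := by
    refine intervalIntegral.integral_congr_ae (ae_of_all _ fun v hv => ?_)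
    rw [uIoc_of_le (by linarith)] at hv
    have hGv : G v ≤ G (x + h) :=
      hG ⟨hv.1, by linarith [hv.2]⟩ ⟨hv.1.trans_le hv.2, by linarith [hv.2]⟩ hv.2
    rw [abs_sub_comm, abs_of_nonneg (sub_nonneg.2 hGv)]
  have hright : ∫ v in x + h..x + 2 * h, |G v - G (x + h)| =
      ∫ v in x + h..x + 2 * h, (G v - G (x + h)) := by
    refine intervalIntegral.integral_congr_ae (ae_of_all _ fun v hv => ?_)
    rw [uIoc_of_le (by linarith)] at hv
    have hGv : G (x + h) ≤ G v :=
      hG ⟨by linarith [hv.1, hv.2], by linarith⟩ ⟨by linarith [hv.1], hv.2⟩ hv.1.le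
    rw [abs_of_nonneg (sub_nonneg.2 hGv)]
  rw [← intervalIntegral.integral_add_adjacent_intervals (b := x + h)
    (hl.sub intervalIntegrable_const).abs (hr.sub intervalIntegrable_const).abs, hleft, hright,
    intervalIntegral.integral_sub intervalIntegrable_const hl,
    intervalIntegral.integral_sub hr intervalIntegrable_const,
    intervalIntegral.integral_const, intervalIntegral.integral_const]
  simp only [smul_eq_mul]
  ring

lemma integral_le_integral_add_of_monotoneOn {x h : ℝ} (hh : 0 ≤ h)
    (hG : MonotoneOn G (Ioc x (x + 2 * h))) (hGi : IntervalIntegrable G volume x (x + 2 * h)) :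
    ∫ v in x..x + h, G v ≤ ∫ v in x + h..x + 2 * h, G v := by
  have hl : IntervalIntegrable G volume x (x + h) :=
    hGi.mono_set (uIcc_subset_uIcc left_mem_uIcc (mem_uIcc_of_le (by linarith) (by linarith)))
  have hr : IntervalIntegrable G volume (x + h) (x + 2 * h) :=
    hGi.mono_set (uIcc_subset_uIcc (mem_uIcc_of_le (by linarith) (by linarith)) right_mem_uIcc)
  have hr' : IntervalIntegrable (fun v => G (v + h)) volume x (x + h) := by
    simpa [show x + 2 * h - h = x + h by ring] using hr.comp_add_right h
  calc ∫ v in x..x + h, G v ≤ ∫ v in x..x + h, G (v + h) :=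
        intervalIntegral.integral_mono_on_of_le_Ioo (by linarith) hl hr' fun v hv =>
          hG ⟨hv.1, by linarith [hv.2]⟩ ⟨by linarith [hv.1], by linarith [hv.2]⟩ (by linarith)
    _ = ∫ v in x + h..x + 2 * h, G v := by
      rw [intervalIntegral.integral_comp_add_right, show x + h + h = x + 2 * h by ring]

lemma integral_mem_Icc_of_forall_mem_Icc {x y a b : ℝ} (hxy : x ≤ y)
    (hGi : IntervalIntegrable G volume x y) (hGab : ∀ v ∈ Ioo x y, G v ∈ Icc a b) :
    ∫ v in x..y, G v ∈ Icc ((y - x) * a) ((y - x) * b) := by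
  constructor
  · simpa using intervalIntegral.integral_mono_on_of_le_Ioo hxy intervalIntegrable_const hGi
      fun v hv => (hGab v hv).1
  · simpa using intervalIntegral.integral_mono_on_of_le_Ioo hxy hGi intervalIntegrable_const
      fun v hv => (hGab v hv).2

open Finset in
theorem sum_integral_abs_sub_midpoint_le {a b h : ℝ} {n : ℕ} (hn : 0 < n) (hh : 0 ≤ h)
    (hG : MonotoneOn G (Ioc 0 (2 * n * h))) (hGab : ∀ v ∈ Ioc 0 (2 * n * h), G v ∈ Icc a b) :
    ∑ i ∈ range n, ∫ v in 2 * i * h..2 * i * h + 2 * h, |G v - G (2 * i * h + h)| ≤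
      (b - a) * h := by
  have hGi : IntervalIntegrable G volume 0 (2 * n * h) :=
    intervalIntegrable_of_monotoneOn_Ioc (by positivity) hG fun v hv => (hGab v hv).1
  have hsub : ∀ {y z : ℝ}, 0 ≤ y → y ≤ z → z ≤ 2 * n * h →
      MonotoneOn G (Ioc y z) ∧ IntervalIntegrable G volume y z := fun hy hyz hz =>
    ⟨hG.mono (Ioc_subset_Ioc hy hz), hGi.mono_set (Set.uIcc_subset_uIcc
      (Set.mem_uIcc_of_le hy (by linarith)) (Set.mem_uIcc_of_le (by linarith) hz))⟩
  set J : ℕ → ℝ := fun k => ∫ v in k * h..k * h + h, G v with hJ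
  have hJ_mono : ∀ k, k + 1 < 2 * n → J k ≤ J (k + 1) := by
    intro k hk
    have hk' : (k : ℝ) + 2 ≤ 2 * n := by exact_mod_cast hk
    obtain ⟨hGk, hGik⟩ := hsub (y := k * h) (z := k * h + 2 * h) (by positivity) (by linarith)
      (by nlinarith)
    calc J k ≤ ∫ v in k * h + h..k * h + 2 * h, G v :=
          integral_le_integral_add_of_monotoneOn hh hGk hGik
      _ = J (k + 1) := by simp only [hJ]; push_cast; ring_nf
  have hJ_mem : ∀ k, k + 1 ≤ 2 * n → J k ∈ Icc (h * a) (h * b) := by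
    intro k hk
    have hk' : (k : ℝ) + 1 ≤ 2 * n := by exact_mod_cast hk
    have hGik := (hsub (y := k * h) (z := k * h + h) (by positivity) (by linarith)
      (by nlinarith)).2
    simpa using integral_mem_Icc_of_forall_mem_Icc (by linarith) hGik fun v hv =>
      hGab v ⟨by nlinarith [hv.1], by nlinarith [hv.2]⟩
  calc ∑ i ∈ range n, ∫ v in 2 * i * h..2 * i * h + 2 * h, |G v - G (2 * i * h + h)|
      = ∑ i ∈ range n, (J (2 * i + 1) - J (2 * i)) := by
        refine sum_congr rfl fun i hi => ?_
        have hi' : (i : ℝ) + 1 ≤ n := by exact_mod_cast mem_range.1 hi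
        obtain ⟨hGi, hGii⟩ := hsub (y := 2 * i * h) (z := 2 * i * h + 2 * h) (by positivity)
          (by linarith) (by nlinarith)
        rw [integral_abs_sub_midpoint_eq hh hGi hGii]
        simp only [hJ]; push_cast; ring_nf
    _ ≤ J (2 * n - 1) - J 0 := sum_range_sub_le_of_le_succ hJ_mono
    _ ≤ (b - a) * h := by
        linarith [(hJ_mem 0 (by omega)).1, (hJ_mem (2 * n - 1) (by omega)).2]

open Finset in
theorem sum_integral_abs_sub_midpoint_le_div {a b : ℝ} {n : ℕ} (hn : 0 < n)
    (hG : MonotoneOn G (Set.Ioc 0 1)) (hGab : ∀ v ∈ Set.Ioc 0 1, G v ∈ Set.Icc a b) :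
    ∑ i ∈ range n, ∫ v in (i / n : ℝ)..(i + 1) / n, |G v - G ((2 * i + 1) / (2 * n))| ≤
      (b - a) / (2 * n) := by
  have hnh : 2 * n * (1 / (2 * n) : ℝ) = 1 := by field_simp
  convert sum_integral_abs_sub_midpoint_le hn (h := 1 / (2 * n)) (by positivity)
    (by rwa [hnh]) (by rwa [hnh]) using 1
  · refine sum_congr rfl fun i _ => ?_
    congr 1
    · funext v
      congr 3
      field_simp
    · field_simp
    · field_simp
  · ring

end Monotone

section SupportedOnIcc

variable {m : Measure ℝ} [IsProbabilityMeasure m] {a b : ℝ}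

lemma cdfOf_eq_zero_of_lt (hm : m (Icc a b) = 1) {x : ℝ} (hx : x < a) : cdfOf m x = 0 := by
  have hcompl : m (Icc a b)ᶜ = 0 := (prob_compl_eq_zero_iff measurableSet_Icc).2 hm
  have : m (Iic x) = 0 :=
    measure_mono_null (fun y (hy : y ≤ x) (hy' : y ∈ Icc a b) => (hy'.1.trans hy).not_gt hx) hcompl
  simp [cdfOf, this]

lemma cdfOf_eq_one_of_le (hm : m (Icc a b) = 1) {x : ℝ} (hx : b ≤ x) : cdfOf m x = 1 := by
  have : m (Iic x) = 1 :=
    le_antisymm prob_le_one (hm ▸ measure_mono fun y hy => hy.2.trans hx)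
  simp [cdfOf, this]

lemma le_of_le_cdfOf (hm : m (Icc a b) = 1) {v x : ℝ} (hv : 0 < v) (hx : v ≤ cdfOf m x) :
    a ≤ x := by
  by_contra! hxa
  rw [cdfOf_eq_zero_of_lt hm hxa] at hx
  linarith

lemma bddBelow_setOf_le_cdfOf (hm : m (Icc a b) = 1) {v : ℝ} (hv : 0 < v) :
    BddBelow {x | v ≤ cdfOf m x} :=
  ⟨a, fun _ hx => le_of_le_cdfOf hm hv hx⟩

lemma nonempty_setOf_le_cdfOf (hm : m (Icc a b) = 1) {v : ℝ} (hv : v ≤ 1) :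
    {x | v ≤ cdfOf m x}.Nonempty :=
  ⟨b, by simpa [cdfOf_eq_one_of_le hm le_rfl] using hv⟩

lemma pinv_cdfOf_mem_Icc (hm : m (Icc a b) = 1) {v : ℝ} (hv : v ∈ Ioc 0 1) :
    pinv (cdfOf m) v ∈ Icc a b :=
  ⟨le_csInf (nonempty_setOf_le_cdfOf hm hv.2) fun _ hx => le_of_le_cdfOf hm hv.1 hx,
    csInf_le (bddBelow_setOf_le_cdfOf hm hv.1) (by simpa [cdfOf_eq_one_of_le hm le_rfl] using hv.2)⟩

lemma monotoneOn_pinv_cdfOf (hm : m (Icc a b) = 1) : MonotoneOn (pinv (cdfOf m)) (Ioc 0 1) :=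
  fun _ hv _ hw hvw => csInf_le_csInf (bddBelow_setOf_le_cdfOf hm hv.1)
    (nonempty_setOf_le_cdfOf hm hw.2) fun _ hx => hvw.trans hx

end SupportedOnIcc

section Empirical

variable {x : ℕ → ℝ} {n : ℕ}

open Finset in
lemma cdfOf_empirical (y : ℝ) :
    cdfOf ((n : ℝ≥0∞)⁻¹ • ∑ k ∈ Finset.Icc 1 n, Measure.dirac (x k)) y =
      #{k ∈ Finset.Icc 1 n | x k ≤ y} / n := by
  simp [cdfOf, Measure.finsetSum_apply, Measure.dirac_apply', indicator, Finset.sum_boole,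
    div_eq_inv_mul]

open Finset in
lemma lt_card_filter_le_iff (hx : MonotoneOn x (Set.Icc 1 n)) {j : ℕ} (hj : j < n) (y : ℝ) :
    j < #{k ∈ Finset.Icc 1 n | x k ≤ y} ↔ x (j + 1) ≤ y := by
  constructor
  · intro hcard
    by_contra! hy
    have hsub : {k ∈ Finset.Icc 1 n | x k ≤ y} ⊆ Finset.Icc 1 j := fun k hk => by
      simp only [mem_filter, Finset.mem_Icc] at hk ⊢
      refine ⟨hk.1.1, ?_⟩
      by_contra! hkj
      exact (hy.trans_le (hx ⟨by omega, by omega⟩ ⟨hk.1.1, hk.1.2⟩ hkj)).not_ge hk.2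
    have := Finset.card_le_card hsub
    simp only [Nat.card_Icc] at this
    omega
  · intro hy
    have hsub : Finset.Icc 1 (j + 1) ⊆ {k ∈ Finset.Icc 1 n | x k ≤ y} := fun k hk => by
      simp only [mem_filter, Finset.mem_Icc] at hk ⊢
      exact ⟨⟨hk.1, by omega⟩, (hx ⟨hk.1, by omega⟩ ⟨by omega, by omega⟩ hk.2).trans hy⟩
    have := Finset.card_le_card hsub
    simp only [Nat.card_Icc] at this
    omega

lemma pinv_cdfOf_empirical (hx : MonotoneOn x (Set.Icc 1 n)) {j : ℕ} (hj : j < n) {v : ℝ}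
    (hv : v ∈ Ioc (j / n : ℝ) ((j + 1) / n)) :
    pinv (cdfOf ((n : ℝ≥0∞)⁻¹ • ∑ k ∈ Finset.Icc 1 n, Measure.dirac (x k))) v = x (j + 1) := by
  have hn : (0 : ℝ) < n := by exact_mod_cast hj.pos
  suffices {y | v ≤ cdfOf ((n : ℝ≥0∞)⁻¹ • ∑ k ∈ Finset.Icc 1 n, Measure.dirac (x k)) y} =
      Ici (x (j + 1)) by rw [pinv, this, csInf_Ici]
  ext y
  rw [mem_ofPred_eq, cdfOf_empirical, mem_Ici, ← lt_card_filter_le_iff hx hj]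
  constructor
  · intro h
    exact_mod_cast (div_lt_div_iff_of_pos_right hn).1 (hv.1.trans_le h)
  · intro h
    exact hv.2.trans (div_le_div_of_nonneg_right (by exact_mod_cast h) hn.le)

lemma pinv_cdfOf_quant {m : Measure ℝ} [IsProbabilityMeasure m] {a b : ℝ}
    (hm : m (Icc a b) = 1) {n i : ℕ} (hi : i < n) {v : ℝ} (hv : v ∈ Ioc (i / n : ℝ) ((i + 1) / n)) :
    pinv (cdfOf (quant m n)) v = pinv (cdfOf m) ((2 * i + 1) / (2 * n)) := by
  have hmem : ∀ k ∈ Set.Icc 1 n, (2 * (k : ℝ) - 1) / (2 * n) ∈ Ioc 0 1 := fun k hk => by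
    have hk1 : (1 : ℝ) ≤ k := by exact_mod_cast hk.1
    have hkn : (k : ℝ) ≤ n := by exact_mod_cast hk.2
    exact ⟨div_pos (by linarith) (by linarith), (div_le_one (by linarith)).2 (by linarith)⟩
  have hx : MonotoneOn (fun k : ℕ => pinv (cdfOf m) ((2 * (k : ℝ) - 1) / (2 * n))) (Set.Icc 1 n) :=
    fun k hk l hl hkl => monotoneOn_pinv_cdfOf hm (hmem k hk) (hmem l hl) (by gcongr)
  rw [quant, pinv_cdfOf_empirical hx hi hv]
  push_cast
  ring_nf

end Empirical

theorem stmt1_general (m : Measure ℝ) [IsProbabilityMeasure m] (a b : ℝ)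
    (hm : m (Icc a b) = 1) (n : ℕ) (hn : 1 ≤ n) :
    W1 m (quant m n) ≤ (b - a) / (2 * n) := by
  set G := pinv (cdfOf m)
  have hG : MonotoneOn G (Ioc 0 1) := monotoneOn_pinv_cdfOf hm
  have hGab : ∀ v ∈ Ioc 0 1, G v ∈ Icc a b := fun v hv => pinv_cdfOf_mem_Icc hm hv
  have hGi : IntervalIntegrable G volume 0 1 :=
    intervalIntegrable_of_monotoneOn_Ioc zero_le_one hG fun v hv => (hGab v hv).1
  have hquant : ∀ i < n, EqOn (fun v => |G v - pinv (cdfOf (quant m n)) v|)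
      (fun v => |G v - G ((2 * i + 1) / (2 * n))|) (uIoc (i / n) ((i + 1) / n)) :=
    fun i hi v hv => by
      rw [uIoc_of_le (by gcongr; linarith)] at hv
      simp only [pinv_cdfOf_quant hm hi hv, G]
  have hint : ∀ i < n, IntervalIntegrable (fun v => |G v - G ((2 * i + 1) / (2 * n))|) volume
      (i / n) ((i + 1) / n) := fun i hi => by
    have hi' : (i + 1 : ℝ) ≤ n := by exact_mod_cast hi
    refine ((hGi.mono_set (uIcc_subset_uIcc ?_ ?_)).sub intervalIntegrable_const).abs <;>
      exact mem_uIcc_of_le (by positivity) ((div_le_one (by positivity)).2 (by linarith))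
  calc W1 m (quant m n)
      = ∑ i ∈ Finset.range n, ∫ v in (i / n : ℝ)..(i + 1) / n,
          |G v - pinv (cdfOf (quant m n)) v| :=
        setIntegral_Ioo_eq_sum_intervalIntegral hn fun i hi =>
          (intervalIntegrable_congr (hquant i hi)).2 (hint i hi)
    _ = ∑ i ∈ Finset.range n, ∫ v in (i / n : ℝ)..(i + 1) / n,
          |G v - G ((2 * i + 1) / (2 * n))| :=
        Finset.sum_congr rfl fun i hi =>
          intervalIntegral.integral_congr_ae (ae_of_all _ (hquant i (Finset.mem_range.1 hi)))
    _ ≤ (b - a) / (2 * n) := sum_integral_abs_sub_midpoint_le_div hn hG hGab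

theorem stmt1 (m : Measure ℝ) [IsProbabilityMeasure m] (a b : ℝ) (hab : a < b)
    (hm : m (Icc a b) = 1) (n : ℕ) (hn : 1 ≤ n) :
    W1 m (quant m n) ≤ (b - a) / (2 * n) :=
  stmt1_general m a b hm n hn
end

section
/- Let $m$ be a probability measure on $\mathbb{R}$ with CDF $F$, and for $n \geq 1$ let $\mu^n = \frac{1}{n}\sum_{k=1}^n \delta_{x_k}$ with $x_k = F^{-1}((2k-1)/(2n))$. Then $W_1(m,\mu^n) \leq \frac{1}{\sqrt{n}} \int_{\mathbb{R}} \sqrt{F(x)(1-F(x))}\,dx$, where the right-hand side may be infinite. -/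
/-!
Since `F⁻¹(v) ≤ x ↔ v ≤ F(x)` for `0 < v < 1`, the atom `F⁻¹((2k-1)/(2n))` lies left of `x`
exactly when `k ≤ n F(x) + 1/2`. So, writing `s = n F(x)`, the CDF of `μⁿ` at `x` is `r / n`
with `r = ⌊s + 1/2⌋`, an integer nearest to `s`. Then `d = |s - r|` satisfies `d ≤ 1/2`,
`d ≤ s` and `d ≤ n - s`, whence `s (n - s) ≥ d (n - d) ≥ n d²`, i.e.
`|F(x) - Fₙ(x)| ≤ √(F(x)(1 - F(x)) / n)` pointwise; integrating in `x` gives the bound.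
-/

open MeasureTheory Set
open scoped ENNReal

/-- Wasserstein-1 distance as the `L¹` distance between the CDFs
(here expressed in `ℝ≥0∞` so that it may be infinite). -/
noncomputable def W1e (m m' : Measure ℝ) : ℝ≥0∞ :=
  ∫⁻ x, ENNReal.ofReal |cdfOf m x - cdfOf m' x|

open ProbabilityTheory
open scoped Finset

lemma cdfOf_eq_cdf (m : Measure ℝ) [IsProbabilityMeasure m] : cdfOf m = cdf m := by
  funext x
  rw [cdfOf, cdf_eq_real, measureReal_def]

lemma pinv_cdfOf_le_iff (m : Measure ℝ) [IsProbabilityMeasure m] {v : ℝ} (hv0 : 0 < v)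
    (hv1 : v < 1) (x : ℝ) : pinv (cdfOf m) v ≤ x ↔ v ≤ cdfOf m x := by
  rw [cdfOf_eq_cdf, pinv]
  set S : Set ℝ := {y | v ≤ cdf m y}
  obtain ⟨a, ha⟩ : S.Nonempty := ((tendsto_cdf_atTop (μ := m)).eventually_const_le hv1).exists
  obtain ⟨b, hb⟩ : ∃ b, cdf m b < v :=
    ((tendsto_cdf_atBot (μ := m)).eventually_lt_const hv0).exists
  have hbdd : BddBelow S :=
    ⟨b, fun y hy => le_of_not_ge fun hyb => hb.not_ge (hy.trans ((cdf m).mono hyb))⟩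
  -- right-continuity of `cdf m` puts `sInf S` in `S`
  have hmem : v ≤ cdf m (sInf S) := by
    refine ge_of_tendsto (((cdf m).right_continuous _).mono Ioi_subset_Ici_self) ?_
    filter_upwards [self_mem_nhdsWithin] with y hy
    obtain ⟨s, hs, hsy⟩ := exists_lt_of_csInf_lt ⟨a, ha⟩ hy
    exact hs.trans ((cdf m).mono hsy.le)
  exact ⟨fun h => hmem.trans ((cdf m).mono h), fun h => csInf_le hbdd h⟩

lemma card_filter_Icc_natCast_le (n : ℕ) (s : ℝ) :
    #{k ∈ Finset.Icc 1 n | ((k : ℕ) : ℝ) ≤ s} = min n ⌊s⌋₊ := by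
  suffices ({k ∈ Finset.Icc 1 n | ((k : ℕ) : ℝ) ≤ s} : Finset ℕ) = Finset.Icc 1 (min n ⌊s⌋₊) by
    rw [this, Nat.card_Icc, Nat.add_sub_cancel]
  ext k
  rw [Finset.mem_filter, Finset.mem_Icc, Finset.mem_Icc, le_min_iff]
  constructor
  · rintro ⟨⟨hk1, hkn⟩, hks⟩
    exact ⟨hk1, hkn, (Nat.le_floor_iff' (by omega)).2 hks⟩
  · rintro ⟨hk1, hkn, hks⟩
    exact ⟨⟨hk1, hkn⟩, (Nat.le_floor_iff' (by omega)).1 hks⟩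

lemma cdfOf_quant (m : Measure ℝ) [IsProbabilityMeasure m] (n : ℕ) (x : ℝ) :
    cdfOf (quant m n) x = min n ⌊n * cdfOf m x + 1 / 2⌋₊ / n := by
  have hatom : ∀ k ∈ Finset.Icc 1 n,
      Measure.dirac (pinv (cdfOf m) ((2 * (k : ℝ) - 1) / (2 * n))) (Iic x)
        = if (k : ℝ) ≤ n * cdfOf m x + 1 / 2 then 1 else 0 := by
    intro k hk
    obtain ⟨hk1, hkn⟩ := Finset.mem_Icc.1 hk
    have hk1 : (1 : ℝ) ≤ k := by exact_mod_cast hk1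
    have hkn : (k : ℝ) ≤ n := by exact_mod_cast hkn
    have hv0 : 0 < (2 * (k : ℝ) - 1) / (2 * n) := by apply div_pos <;> linarith
    have hv1 : (2 * (k : ℝ) - 1) / (2 * n) < 1 := by rw [div_lt_one (by linarith)]; linarith
    have hiff : (2 * (k : ℝ) - 1) / (2 * n) ≤ cdfOf m x ↔ (k : ℝ) ≤ n * cdfOf m x + 1 / 2 := by
      rw [div_le_iff₀ (by linarith)]
      constructor <;> intro h <;> linarith
    rw [Measure.dirac_apply' _ measurableSet_Iic, indicator_apply]
    simp only [mem_Iic, pinv_cdfOf_le_iff m hv0 hv1, hiff, Pi.one_apply]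
  rw [cdfOf, quant, Measure.smul_apply, smul_eq_mul, Measure.finsetSum_apply,
    Finset.sum_congr rfl hatom, Finset.sum_boole, card_filter_Icc_natCast_le, ENNReal.toReal_mul,
    ENNReal.toReal_inv]
  simp [inv_mul_eq_div]

section Rounding

variable {s : ℝ}

lemma floor_add_half_le {n : ℕ} (hs : s ≤ n) : ⌊s + 1 / 2⌋₊ ≤ n :=
  Nat.lt_succ_iff.1 <| (Nat.floor_lt' n.succ_ne_zero).2 <| by push_cast; linarith

lemma abs_sub_floor_add_half_le_half (hs : 0 ≤ s) : |s - ⌊s + 1 / 2⌋₊| ≤ 1 / 2 := by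
  have h₁ := Nat.floor_le (a := s + 1 / 2) (by linarith)
  have h₂ := Nat.lt_floor_add_one (s + 1 / 2)
  exact abs_sub_le_iff.2 ⟨by linarith, by linarith⟩

lemma abs_sub_floor_add_half_le_self (hs : 0 ≤ s) : |s - ⌊s + 1 / 2⌋₊| ≤ s := by
  have h₁ := Nat.floor_le (a := s + 1 / 2) (by linarith)
  refine abs_sub_le_iff.2 ⟨by linarith [Nat.cast_nonneg (α := ℝ) ⌊s + 1 / 2⌋₊], ?_⟩
  rcases Nat.eq_zero_or_pos ⌊s + 1 / 2⌋₊ with h | h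
  · rw [h, Nat.cast_zero]; linarith
  · have : (1 : ℝ) ≤ ⌊s + 1 / 2⌋₊ := by exact_mod_cast h
    linarith

lemma abs_sub_floor_add_half_le_sub {n : ℕ} (hs : s ≤ n) : |s - ⌊s + 1 / 2⌋₊| ≤ n - s := by
  have h₁ : (⌊s + 1 / 2⌋₊ : ℝ) ≤ n := by exact_mod_cast floor_add_half_le hs
  have h₂ := Nat.lt_floor_add_one (s + 1 / 2)
  refine abs_sub_le_iff.2 ⟨?_, by linarith⟩
  rcases lt_or_ge ⌊s + 1 / 2⌋₊ n with h | h
  · have : (⌊s + 1 / 2⌋₊ : ℝ) + 1 ≤ n := by exact_mod_cast h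
    linarith
  · have : (n : ℝ) ≤ ⌊s + 1 / 2⌋₊ := by exact_mod_cast h
    linarith

end Rounding

lemma mul_sq_le_of_abs_sub_le {n s r : ℝ} (h : |s - r| ≤ 1 / 2) (h₀ : |s - r| ≤ s)
    (h₁ : |s - r| ≤ n - s) : n * (s - r) ^ 2 ≤ s * (n - s) := by
  have hd := abs_nonneg (s - r)
  -- with `d = |s - r|`: `s (n - s) ≥ d (n - d) ≥ n d²`
  nlinarith [sq_abs (s - r), mul_nonneg (sub_nonneg.2 h₀) (by linarith : 0 ≤ n - s - |s - r|),
    mul_nonneg hd (by nlinarith : 0 ≤ n * (1 - |s - r|) - |s - r|)]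

lemma abs_sub_floor_div_le {t : ℝ} (ht₀ : 0 ≤ t) (ht₁ : t ≤ 1) {n : ℕ} (hn : 0 < n) :
    |t - ⌊n * t + 1 / 2⌋₊ / n| ≤ 1 / √n * √(t * (1 - t)) := by
  have hn' : (0 : ℝ) < n := by exact_mod_cast hn
  have hs₀ : 0 ≤ n * t := by positivity
  have hs₁ : n * t ≤ n := mul_le_of_le_one_right hn'.le ht₁
  have key := mul_sq_le_of_abs_sub_le (abs_sub_floor_add_half_le_half hs₀)
    (abs_sub_floor_add_half_le_self hs₀) (abs_sub_floor_add_half_le_sub hs₁)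
  rw [one_div_mul_eq_div, ← Real.sqrt_div' _ hn'.le]
  apply Real.abs_le_sqrt
  have e₁ : (t - ⌊n * t + 1 / 2⌋₊ / n) ^ 2 = n * (n * t - ⌊n * t + 1 / 2⌋₊) ^ 2 / n ^ 3 := by
    field_simp
  have e₂ : t * (1 - t) / n = n * t * (n - n * t) / n ^ 3 := by
    field_simp
  rw [e₁, e₂]
  exact div_le_div_of_nonneg_right key (by positivity)

theorem stmt2 (m : Measure ℝ) [IsProbabilityMeasure m] (n : ℕ) (hn : 1 ≤ n) :
    W1e m (quant m n) ≤
      ENNReal.ofReal (1 / Real.sqrt n) *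
        ∫⁻ x, ENNReal.ofReal (Real.sqrt (cdfOf m x * (1 - cdfOf m x))) := by
  have hpoint (x : ℝ) : |cdfOf m x - cdfOf (quant m n) x| ≤
      1 / √n * √(cdfOf m x * (1 - cdfOf m x)) := by
    have ht₀ : 0 ≤ cdfOf m x := cdfOf_eq_cdf m ▸ cdf_nonneg m x
    have ht₁ : cdfOf m x ≤ 1 := cdfOf_eq_cdf m ▸ cdf_le_one m x
    have hs : (n : ℝ) * cdfOf m x ≤ n := mul_le_of_le_one_right n.cast_nonneg ht₁
    rw [cdfOf_quant, min_eq_right (floor_add_half_le hs)]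
    exact abs_sub_floor_div_le ht₀ ht₁ hn
  calc W1e m (quant m n)
      ≤ ∫⁻ x, ENNReal.ofReal (1 / √n) * ENNReal.ofReal (√(cdfOf m x * (1 - cdfOf m x))) :=
        lintegral_mono fun x => by
          rw [← ENNReal.ofReal_mul (by positivity)]
          exact ENNReal.ofReal_le_ofReal (hpoint x)
    _ = _ := lintegral_const_mul' _ _ ENNReal.ofReal_ne_top
end

section
/- Let $Q : \{0, 1, \ldots, n\} \to \mathbb{R}$. Andrew's monotone chain algorithm, which maintains a list $L$ of indices initialized to $[1,0]$ and, for $k = 2, \ldots, n$, repeatedly removes the first element $L(1)$ of $L$ while $|L| > 1$ and $\frac{Q(k) - Q(L(1))}{k - L(1)} < \frac{Q(L(1)) - Q(L(2))}{L(1) - L(2)}$, then prepends $k$ to $L$, terminates with $L$ equal (in decreasing order) to the set of indices where the piecewise-linear interpolation of $Q$ coincides with its lower convex hull on $\{0,\ldots,n\}$. -/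
open scoped Classical

/-! After processing `m`, the list is exactly the decreasing list of lower-hull vertices of
`(0, Q 0), …, (m, Q m)`. A vertex `c ≤ m` stays a vertex after the point `m + 1` is added iff no
secant ending at `c` is steeper than the secant from `c` to `m + 1`. If `b < c` are consecutive
hull vertices, the steepest secant ending at `c` is the one from `b`: a steepest secant from the
window `[b, c)` starts at a hull vertex, which can only be `b`. So the scan's single comparison
with `b` decides whether `c` survives; if it does, every vertex below `c` survives as well, since
its secants into `c` are no steeper than the one from `c` to `m + 1`. -/

/-- One step of the Graham scan: given the current list `L` (indices in decreasing
order) and a new index `k`, repeatedly remove the first element `L(1)` while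
`|L| > 1` and `(Q k - Q (L 1))/(k - L 1) < (Q (L 1) - Q (L 2))/(L 1 - L 2)`,
then prepend `k`. -/
noncomputable def scanStep (Q : ℕ → ℝ) (k : ℕ) : List ℕ → List ℕ
  | a :: b :: rest =>
      if (Q k - Q a) / ((k : ℝ) - a) < (Q a - Q b) / ((a : ℝ) - b) then
        scanStep Q k (b :: rest)
      else k :: a :: b :: rest
  | L => k :: L

/-- Andrew's monotone chain algorithm: starting from the list `[1, 0]`, process the
indices `k = 2, …, n` in increasing order. -/
noncomputable def andrew (Q : ℕ → ℝ) (n : ℕ) : List ℕ :=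
  (List.range' 2 (n - 1)).foldl (fun L k => scanStep Q k L) [1, 0]

/-- `k` is a vertex of the lower convex hull of `(0, Q 0), …, (n, Q n)`, i.e. the
piecewise-linear interpolation of `Q` coincides at `k` with its lower convex hull:
`Q k` lies below every chord through points `i ≤ k ≤ j` of the graph. -/
def IsHullIndex (Q : ℕ → ℝ) (n k : ℕ) : Prop :=
  k ≤ n ∧ ∀ i j : ℕ, i ≤ k → k ≤ j → j ≤ n →
    ((j : ℝ) - i) * Q k ≤ ((j : ℝ) - k) * Q i + ((k : ℝ) - i) * Q j

noncomputable def secant (Q : ℕ → ℝ) (i j : ℕ) : ℝ := (Q j - Q i) / ((j : ℝ) - i)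

section Secant

variable {Q : ℕ → ℝ} {i k j : ℕ}

lemma cast_sub_pos {i j : ℕ} (h : i < j) : (0 : ℝ) < (j : ℝ) - i :=
  sub_pos.2 (Nat.cast_lt.2 h)

lemma belowChord_iff_secant_le (hik : i < k) (hkj : k < j) :
    ((j : ℝ) - i) * Q k ≤ ((j : ℝ) - k) * Q i + ((k : ℝ) - i) * Q j ↔
      secant Q i k ≤ secant Q k j := by
  rw [secant, secant, div_le_div_iff₀ (cast_sub_pos hik) (cast_sub_pos hkj)]
  constructor <;> intro h <;> linarith

-- `secant Q i j` is a weighted mean of `secant Q i k` and `secant Q k j`, so it lies between them.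
lemma secant_left_le_right_iff_left_le_outer (hik : i < k) (hkj : k < j) :
    secant Q i k ≤ secant Q k j ↔ secant Q i k ≤ secant Q i j := by
  rw [secant, secant, secant, div_le_div_iff₀ (cast_sub_pos hik) (cast_sub_pos hkj),
    div_le_div_iff₀ (cast_sub_pos hik) (cast_sub_pos (hik.trans hkj))]
  constructor <;> intro h <;> linarith

lemma secant_left_le_right_iff_outer_le_right (hik : i < k) (hkj : k < j) :
    secant Q i k ≤ secant Q k j ↔ secant Q i j ≤ secant Q k j := by
  rw [secant, secant, secant, div_le_div_iff₀ (cast_sub_pos hik) (cast_sub_pos hkj),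
    div_le_div_iff₀ (cast_sub_pos (hik.trans hkj)) (cast_sub_pos hkj)]
  constructor <;> intro h <;> linarith

lemma secant_right_le_outer_iff_outer_le_left (hik : i < k) (hkj : k < j) :
    secant Q k j ≤ secant Q i j ↔ secant Q i j ≤ secant Q i k := by
  rw [secant, secant, secant, div_le_div_iff₀ (cast_sub_pos hkj) (cast_sub_pos (hik.trans hkj)),
    div_le_div_iff₀ (cast_sub_pos (hik.trans hkj)) (cast_sub_pos hik)]
  constructor <;> intro h <;> linarith

end Secant

section Hull

variable {Q : ℕ → ℝ} {m n k : ℕ}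

lemma isHullIndex_iff_secant_le :
    IsHullIndex Q n k ↔
      k ≤ n ∧ ∀ i j, i < k → k < j → j ≤ n → secant Q i k ≤ secant Q k j := by
  refine and_congr_right fun _ => ⟨fun h i j hik hkj hjn => ?_, fun h i j hik hkj hjn => ?_⟩
  · exact (belowChord_iff_secant_le hik hkj).1 (h i j hik.le hkj.le hjn)
  · rcases hik.eq_or_lt with rfl | hik
    · exact le_of_eq (by ring)
    rcases hkj.eq_or_lt with rfl | hkj
    · exact le_of_eq (by ring)
    exact (belowChord_iff_secant_le hik hkj).2 (h i j hik hkj hjn)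

lemma IsHullIndex.secant_le (h : IsHullIndex Q n k) {i j : ℕ} (hik : i < k) (hkj : k < j)
    (hjn : j ≤ n) : secant Q i k ≤ secant Q k j :=
  (isHullIndex_iff_secant_le.1 h).2 i j hik hkj hjn

lemma isHullIndex_zero (Q : ℕ → ℝ) (n : ℕ) : IsHullIndex Q n 0 :=
  isHullIndex_iff_secant_le.2 ⟨n.zero_le, fun i _ hi => absurd hi i.not_lt_zero⟩

lemma isHullIndex_self (Q : ℕ → ℝ) (n : ℕ) : IsHullIndex Q n n :=
  isHullIndex_iff_secant_le.2 ⟨le_rfl, fun _ _ _ hj hjn => absurd hjn (not_le.2 hj)⟩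

lemma IsHullIndex.mono {n' : ℕ} (h : IsHullIndex Q n' k) (hkn : k ≤ n) (hnn' : n ≤ n') :
    IsHullIndex Q n k :=
  ⟨hkn, fun i j hi hj hjn => h.2 i j hi hj (hjn.trans hnn')⟩

lemma isHullIndex_succ_iff (hkm : k ≤ m) :
    IsHullIndex Q (m + 1) k ↔ IsHullIndex Q m k ∧ ∀ i < k, secant Q i k ≤ secant Q k (m + 1) := by
  refine ⟨fun h => ⟨h.mono hkm m.le_succ, fun i hi => h.secant_le hi (by omega) le_rfl⟩,
    fun ⟨h, hsucc⟩ => isHullIndex_iff_secant_le.2 ⟨by omega, fun i j hik hkj hjn => ?_⟩⟩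
  rcases hjn.eq_or_lt with rfl | hjn
  · exact hsucc i hik
  · exact h.secant_le hik hkj (by omega)

lemma isHullIndex_of_forall_secant_le {a w : ℕ} (ha : IsHullIndex Q m a) (hwa : w < a)
    (hmax : ∀ i < a, secant Q i a ≤ secant Q w a) : IsHullIndex Q m w := by
  refine isHullIndex_iff_secant_le.2 ⟨by linarith [ha.1], fun i j hiw hwj hjm => ?_⟩
  have hleft : secant Q i w ≤ secant Q w a :=
    (secant_left_le_right_iff_outer_le_right hiw hwa).2 (hmax i (hiw.trans hwa))
  refine hleft.trans ?_
  rcases lt_trichotomy j a with hja | rfl | haj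
  · exact (secant_right_le_outer_iff_outer_le_left hwj hja).1 (hmax j hja)
  · exact le_rfl
  · exact (secant_left_le_right_iff_left_le_outer hwa haj).1 (ha.secant_le hwa haj hjm)

lemma secant_le_secant_of_consecutive {a b : ℕ} (hb : IsHullIndex Q m b)
    (ha : IsHullIndex Q m a) (hba : b < a) (hgap : ∀ t, b < t → t < a → ¬ IsHullIndex Q m t) :
    ∀ i < a, secant Q i a ≤ secant Q b a := by
  have below : ∀ i ≤ b, secant Q i a ≤ secant Q b a := fun i hib => by
    rcases hib.eq_or_lt with rfl | hib
    · exact le_rfl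
    · exact (secant_left_le_right_iff_outer_le_right hib hba).1 (hb.secant_le hib hba ha.1)
  obtain ⟨w, hw, hwmax⟩ := (Finset.Ico b a).exists_max_image (secant Q · a)
    ⟨b, Finset.mem_Ico.2 ⟨le_rfl, hba⟩⟩
  rw [Finset.mem_Ico] at hw
  have hmax : ∀ i < a, secant Q i a ≤ secant Q w a := fun i hia => by
    rcases le_or_gt i b with hib | hbi
    · exact (below i hib).trans (hwmax b (Finset.mem_Ico.2 ⟨le_rfl, hba⟩))
    · exact hwmax i (Finset.mem_Ico.2 ⟨hbi.le, hia⟩)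
  obtain rfl : w = b := by
    by_contra hwb
    exact hgap w (lt_of_le_of_ne hw.1 (Ne.symm hwb)) hw.2
      (isHullIndex_of_forall_secant_le ha hw.2 hmax)
  exact hmax

lemma IsHullIndex.succ_of_le {c : ℕ} (hc : IsHullIndex Q m c)
    (hcs : ∀ i < c, secant Q i c ≤ secant Q c (m + 1)) (hk : IsHullIndex Q m k) (hkc : k ≤ c) :
    IsHullIndex Q (m + 1) k := by
  refine (isHullIndex_succ_iff (hkc.trans hc.1)).2 ⟨hk, fun i hik => ?_⟩
  rcases hkc.eq_or_lt with rfl | hkc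
  · exact hcs i hik
  calc secant Q i k ≤ secant Q k c := hk.secant_le hik hkc hc.1
    _ ≤ secant Q k (m + 1) :=
      (secant_left_le_right_iff_left_le_outer hkc (by linarith [hc.1])).1 (hcs k hkc)

end Hull

section Scan

variable {Q : ℕ → ℝ} {m : ℕ}

def IsHullList (Q : ℕ → ℝ) (m : ℕ) (L : List ℕ) : Prop :=
  L.Pairwise (· > ·) ∧ ∀ k, k ∈ L ↔ IsHullIndex Q m k

lemma scanStep_cons_cons (Q : ℕ → ℝ) (k a b : ℕ) (rest : List ℕ) :
    scanStep Q k (a :: b :: rest) =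
      if secant Q a k < secant Q b a then scanStep Q k (b :: rest) else k :: a :: b :: rest := by
  rw [scanStep]; rfl

lemma isHullList_succ_cons {c : ℕ} {rest : List ℕ} (hL : (c :: rest).Pairwise (· > ·))
    (hmem : ∀ k, k ∈ c :: rest ↔ IsHullIndex Q m k ∧ k ≤ c)
    (hout : ∀ k, c < k → k ≤ m → ¬ IsHullIndex Q (m + 1) k)
    (hcs : ∀ i < c, secant Q i c ≤ secant Q c (m + 1)) :
    IsHullList Q (m + 1) ((m + 1) :: c :: rest) := by
  have hc : IsHullIndex Q m c := ((hmem c).1 List.mem_cons_self).1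
  refine ⟨List.pairwise_cons.2 ⟨fun k hk => ?_, hL⟩, fun k => ?_⟩
  · have := ((hmem k).1 hk).2; have := hc.1; omega
  rw [List.mem_cons, hmem k]
  refine ⟨?_, fun hk => ?_⟩
  · rintro (rfl | ⟨hk, hkc⟩)
    · exact isHullIndex_self Q (m + 1)
    · exact hc.succ_of_le hcs hk hkc
  by_cases hkm : k = m + 1
  · exact Or.inl hkm
  have hkm : k ≤ m := by have := hk.1; omega
  exact Or.inr ⟨hk.mono hkm m.le_succ, not_lt.1 fun hck => hout k hck hkm hk⟩

lemma isHullList_scanStep_cons {c : ℕ} {rest : List ℕ} (hL : (c :: rest).Pairwise (· > ·))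
    (hmem : ∀ k, k ∈ c :: rest ↔ IsHullIndex Q m k ∧ k ≤ c)
    (hout : ∀ k, c < k → k ≤ m → ¬ IsHullIndex Q (m + 1) k) :
    IsHullList Q (m + 1) (scanStep Q (m + 1) (c :: rest)) := by
  induction rest generalizing c with
  | nil =>
    obtain rfl : c = 0 := by
      simpa [eq_comm] using (hmem 0).2 ⟨isHullIndex_zero Q m, c.zero_le⟩
    exact isHullList_succ_cons hL hmem hout fun i hi => absurd hi i.not_lt_zero
  | cons b rest ih =>
    have hbc : b < c := List.rel_of_pairwise_cons hL List.mem_cons_self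
    have hle_b : ∀ k ∈ b :: rest, k ≤ b := fun k hk => by
      rcases List.mem_cons.1 hk with rfl | hk
      · exact le_rfl
      · exact (List.rel_of_pairwise_cons hL.of_cons hk).le
    have hgap : ∀ t, b < t → t < c → ¬ IsHullIndex Q m t := fun t hbt htc ht => by
      rcases List.mem_cons.1 ((hmem t).2 ⟨ht, htc.le⟩) with rfl | ht
      · exact lt_irrefl t htc
      · exact absurd (hle_b t ht) (not_le.2 hbt)
    rw [scanStep_cons_cons]
    split_ifs with hpop
    · refine ih hL.of_cons (fun k => ⟨fun hk => ⟨((hmem k).1 (List.mem_cons_of_mem _ hk)).1,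
        hle_b k hk⟩, fun ⟨hk, hkb⟩ => ?_⟩) fun k hbk hkm hk => ?_
      · exact (List.mem_cons.1 ((hmem k).2 ⟨hk, hkb.trans hbc.le⟩)).resolve_left (by omega)
      rcases lt_trichotomy k c with hkc | rfl | hck
      · exact hgap k hbk hkc (hk.mono (by omega) m.le_succ)
      · exact not_le.2 hpop (((isHullIndex_succ_iff hkm).1 hk).2 b hbc)
      · exact hout k hck hkm hk
    · have hc : IsHullIndex Q m c := ((hmem c).1 List.mem_cons_self).1
      have hb : IsHullIndex Q m b := ((hmem b).1 (List.mem_cons_of_mem _ List.mem_cons_self)).1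
      exact isHullList_succ_cons hL hmem hout fun i hic =>
        (secant_le_secant_of_consecutive hb hc hbc hgap i hic).trans (not_lt.1 hpop)

lemma IsHullList.scanStep {L : List ℕ} (h : IsHullList Q m L) :
    IsHullList Q (m + 1) (scanStep Q (m + 1) L) := by
  cases L with
  | nil => exact absurd ((h.2 0).2 (isHullIndex_zero Q m)) List.not_mem_nil
  | cons c rest =>
    have hle : ∀ k ∈ c :: rest, k ≤ c := fun k hk => by
      rcases List.mem_cons.1 hk with rfl | hk
      · exact le_rfl
      · exact (List.rel_of_pairwise_cons h.1 hk).le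
    refine isHullList_scanStep_cons h.1
      (fun k => ⟨fun hk => ⟨(h.2 k).1 hk, hle k hk⟩, fun hk => (h.2 k).2 hk.1⟩)
      fun k hck hkm hk => ?_
    exact absurd (hle k ((h.2 k).2 (hk.mono hkm m.le_succ))) (not_le.2 hck)

lemma isHullList_one (Q : ℕ → ℝ) : IsHullList Q 1 [1, 0] := by
  refine ⟨by simp, fun k => ⟨fun hk => ?_, fun hk => ?_⟩⟩
  · rcases (by simpa using hk : k = 1 ∨ k = 0) with rfl | rfl
    · exact isHullIndex_self Q 1
    · exact isHullIndex_zero Q 1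
  · have := hk.1
    interval_cases k <;> simp

lemma andrew_succ (Q : ℕ → ℝ) (hm : 1 ≤ m) :
    andrew Q (m + 1) = scanStep Q (m + 1) (andrew Q m) := by
  obtain ⟨m, rfl⟩ := Nat.exists_eq_add_of_le' hm
  simp only [andrew, Nat.add_sub_cancel, List.range'_concat, List.foldl_append,
    List.foldl_cons, List.foldl_nil]
  congr 1
  omega

lemma isHullList_andrew (Q : ℕ → ℝ) {n : ℕ} (hn : 1 ≤ n) : IsHullList Q n (andrew Q n) := by
  induction n, hn using Nat.le_induction with
  | base => exact isHullList_one Q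
  | succ m hm ih => rw [andrew_succ Q hm]; exact ih.scanStep

end Scan

theorem stmt17 (Q : ℕ → ℝ) (n : ℕ) (hn : 1 ≤ n) :
    andrew Q n = ((Finset.range (n + 1)).filter (IsHullIndex Q n)).sort (· ≥ ·) := by
  have h := isHullList_andrew Q hn
  refine h.1.sortedGT.eq_of_mem_iff (Finset.sortedGT_sort _) fun k => ?_
  rw [h.2 k, Finset.mem_sort, Finset.mem_filter, Finset.mem_range]
  exact ⟨fun hk => ⟨Nat.lt_succ_of_le hk.1, hk⟩, And.right⟩
end
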